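/- arXiv:1907.09633 — 2 statements merged into one kernel-verified Lean document; each statement's English description precedes it below -/
import Mathlib

section
/- For every inductive game tree T and any baseline assignment b, the variance of the root's baseline-corrected value decomposes exactly over the internal nodes of T: Var_z[v̂(T; z)] = Σ_h (π^σ(h))²/π^q(h) · Var_{a∼q_h}[ (σ_h(a)/q_h(a))·(û(h_a) − b_h(a)) ], where the sum ranges over all internal nodes h of T (including the root), û(h_a) is the expected utility of the subtree reached from h by action a, b_h(a) is the baseline stored at h, and the inner term is the variance of the function a ↦ (σ_h(a)/q_h(a))·(û(h_a) − b_h(a)) of a random action a distributed according to q_h. -/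
/-- An inductive game tree: either a leaf carrying a utility `u`, or an internal node
carrying a nonempty finite action set `Fin (n+1)`, a subtree `child a` for each action,
a strategy distribution `σ`, a sampling distribution `q`, and baseline values `b`. -/
inductive GameTree : Type
  | leaf (u : ℝ) : GameTree
  | node (n : ℕ) (child : Fin (n + 1) → GameTree)
      (σ : Fin (n + 1) → ℝ) (q : Fin (n + 1) → ℝ) (b : Fin (n + 1) → ℝ) : GameTree

namespace GameTree

/-- Expected utility `û`: `û(leaf u) = u` and `û(T) = Σ_a σ_T(a)·û(T_a)` at internal nodes. -/
noncomputable def eu : GameTree → ℝ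
  | leaf u => u
  | node n child σ _ _ => ∑ a : Fin (n + 1), σ a * eu (child a)

/-- Validity: at every internal node, `σ` is a probability distribution and `q` is a
probability distribution with `q a > 0` for every action `a`. -/
def Valid : GameTree → Prop
  | leaf _ => True
  | node n child σ q _ =>
      (∀ a, 0 ≤ σ a) ∧ (∑ a : Fin (n + 1), σ a = 1) ∧
      (∀ a, 0 < q a) ∧ (∑ a : Fin (n + 1), q a = 1) ∧
      (∀ a, Valid (child a))

/-- A sampled trajectory of `T`: a root-to-leaf path in the tree. -/
inductive Traj : GameTree → Type
  | leaf (u : ℝ) : Traj (.leaf u)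
  | step {n : ℕ} {child : Fin (n + 1) → GameTree} {σ q b : Fin (n + 1) → ℝ}
      (astar : Fin (n + 1)) (t : Traj (child astar)) : Traj (.node n child σ q b)

/-- Expectation `E_z[f(z)]` over the trajectory distribution (each trajectory has the
product of the `q`-probabilities of its edges as probability). -/
noncomputable def expT : (T : GameTree) → (Traj T → ℝ) → ℝ
  | leaf u, f => f (.leaf u)
  | node n child _ q _, f =>
      ∑ a : Fin (n + 1), q a * expT (child a) (fun t => f (.step a t))

/-- Variance `Var_z[f(z)]` over the trajectory distribution. -/
noncomputable def varT (T : GameTree) (f : Traj T → ℝ) : ℝ :=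
  expT T (fun z => (f z - expT T f) ^ 2)

/-- Baseline-corrected sampled value `v̂(T; z) = Σ_a σ_T(a)·v̂(T, a; z)`, with
`v̂(T, a; z) = (𝟙[a = a*]/q_T(a))·(v̂(T_a; z') − b_T(a)) + b_T(a)`. -/
noncomputable def bval : {T : GameTree} → Traj T → ℝ
  | _, .leaf u => u
  | _, @Traj.step n child σ q b astar t =>
      ∑ a : Fin (n + 1), σ a *
        ((if a = astar then (1 : ℝ) else 0) / q a * (bval t - b a) + b a)

/-- Baseline-corrected sampled action value `v̂(T, a; z)` at an internal root:
`(𝟙[a = a*]/q_T(a))·(v̂(T_a; z') − b_T(a)) + b_T(a)` where `z = a*·z'`. -/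
noncomputable def bvalAct {n : ℕ} {child : Fin (n + 1) → GameTree}
    {σ q b : Fin (n + 1) → ℝ}
    (a : Fin (n + 1)) : Traj (.node n child σ q b) → ℝ
  | .step astar t => (if a = astar then (1 : ℝ) else 0) / q a * (bval t - b a) + b a

/-- Variance `Var_{a∼q}[g(a)]` of a real-valued function `g` of a random action `a`
distributed according to `q`. -/
noncomputable def varFin {m : ℕ} (q g : Fin m → ℝ) : ℝ :=
  ∑ a, q a * (g a - ∑ a', q a' * g a') ^ 2

/-- Sum over all internal nodes `h` of the tree of
`(πσ(h))²/πq(h) · Var_{a∼q_h}[(σ_h(a)/q_h(a))·(û(h_a) − b_h(a))]`, where the accumulators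
`ps` and `pq` carry the products of `σ`- and `q`-probabilities along the path down to the
current root. -/
noncomputable def nodeVarSum (ps pq : ℝ) : GameTree → ℝ
  | leaf _ => 0
  | node n child σ q b =>
      ps ^ 2 / pq * varFin q (fun a => σ a / q a * (eu (child a) - b a))
      + ∑ a : Fin (n + 1), nodeVarSum (ps * σ a) (pq * q a) (child a)

lemma expT_add : ∀ (T : GameTree) (f g : Traj T → ℝ),
    expT T (fun z => f z + g z) = expT T f + expT T g
  | leaf u, f, g => rfl
  | node n child σ q b, f, g => by
    simp only [expT]
    rw [← Finset.sum_add_distrib]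
    exact Finset.sum_congr rfl fun a _ => by rw [expT_add, mul_add]

lemma expT_smul : ∀ (T : GameTree) (c : ℝ) (f : Traj T → ℝ),
    expT T (fun z => c * f z) = c * expT T f
  | leaf u, c, f => rfl
  | node n child σ q b, c, f => by
    simp only [expT, Finset.mul_sum]
    exact Finset.sum_congr rfl fun a _ => by rw [expT_smul]; ring

lemma expT_const : ∀ (T : GameTree), T.Valid → ∀ (c : ℝ),
    expT T (fun _ => c) = c
  | leaf u, _, c => rfl
  | node n child σ q b, hV, c => by
    obtain ⟨hσ, hσ1, hq, hq1, hc⟩ := hV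
    simp only [expT]
    calc ∑ a, q a * expT (child a) (fun _ => c)
        = ∑ a, q a * c := Finset.sum_congr rfl fun a _ => by rw [expT_const _ (hc a)]
      _ = c := by rw [← Finset.sum_mul, hq1, one_mul]

lemma bval_step {n : ℕ} {child : Fin (n + 1) → GameTree} {σ q b : Fin (n + 1) → ℝ}
    (astar : Fin (n + 1)) (t : Traj (child astar)) :
    bval (Traj.step (σ := σ) (q := q) (b := b) astar t)
      = σ astar / q astar * (bval t - b astar) + ∑ a, σ a * b a := by
  simp only [bval, mul_add, Finset.sum_add_distrib]
  congr 1
  rw [Finset.sum_eq_single astar]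
  · simp; ring
  · intro a _ ha; simp [ha]
  · simp

lemma exp_bval : ∀ (T : GameTree), T.Valid →
    expT T (fun z => bval z) = eu T
  | leaf u, _ => rfl
  | node n child σ q b, hV => by
    obtain ⟨hσ, hσ1, hq, hq1, hc⟩ := hV
    simp only [expT, eu]
    have key : ∀ a : Fin (n + 1),
        expT (child a) (fun t => bval (Traj.step (σ := σ) (q := q) (b := b) a t))
          = σ a / q a * (eu (child a) - b a) + ∑ a', σ a' * b a' := by
      intro a
      calc expT (child a) (fun t => bval (Traj.step (σ := σ) (q := q) (b := b) a t))
          = expT (child a) (fun t => σ a / q a * bval t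
              + (∑ a', σ a' * b a' - σ a / q a * b a)) := by
            refine congrArg _ (funext fun t => ?_)
            rw [bval_step]; ring
        _ = σ a / q a * expT (child a) (fun t => bval t)
              + (∑ a', σ a' * b a' - σ a / q a * b a) := by
            rw [expT_add (child a) (fun t => σ a / q a * bval t)
                (fun _ => ∑ a', σ a' * b a' - σ a / q a * b a),
              expT_smul, expT_const _ (hc a)]
        _ = _ := by rw [exp_bval _ (hc a)]; ring
    calc ∑ a, q a * expT (child a)
            (fun t => bval (Traj.step (σ := σ) (q := q) (b := b) a t))
        = ∑ a, (σ a * (eu (child a) - b a) + q a * ∑ a', σ a' * b a') := by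
          refine Finset.sum_congr rfl fun a _ => ?_
          rw [key a]
          have hqa : q a ≠ 0 := (hq a).ne'
          field_simp
      _ = ∑ a, σ a * eu (child a) := by
          rw [Finset.sum_add_distrib, ← Finset.sum_mul, hq1, one_mul]
          have h2 : ∑ a : Fin (n + 1), σ a * (eu (child a) - b a)
              = ∑ a, σ a * eu (child a) - ∑ a, σ a * b a := by
            rw [← Finset.sum_sub_distrib]
            exact Finset.sum_congr rfl fun a _ => by ring
          rw [h2]
          ring

lemma expT_sq_affine (T : GameTree) (hV : T.Valid) (c d : ℝ) (f : Traj T → ℝ) :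
    expT T (fun z => (c * (f z - expT T f) + d) ^ 2)
      = c ^ 2 * varT T f + d ^ 2 := by
  have h1 : (fun z => (c * (f z - expT T f) + d) ^ 2)
      = fun z => (c ^ 2 * (f z - expT T f) ^ 2)
          + ((2 * c * d) * f z + (d ^ 2 - 2 * c * d * expT T f)) := by
    funext z; ring
  rw [h1, expT_add T (fun z => c ^ 2 * (f z - expT T f) ^ 2)
      (fun z => (2 * c * d) * f z + (d ^ 2 - 2 * c * d * expT T f)),
    expT_smul T (c ^ 2) (fun z => (f z - expT T f) ^ 2),
    expT_add T (fun z => (2 * c * d) * f z) (fun _ => d ^ 2 - 2 * c * d * expT T f),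
    expT_smul T (2 * c * d) f, expT_const T hV]
  unfold varT
  ring

lemma nodeVarSum_scale : ∀ (T : GameTree), T.Valid → ∀ (ps pq : ℝ), 0 < pq →
    nodeVarSum ps pq T = ps ^ 2 / pq * nodeVarSum 1 1 T
  | leaf u, _, ps, pq, _ => by simp [nodeVarSum]
  | node n child σ q b, hV, ps, pq, hpq => by
    obtain ⟨hσ, hσ1, hq, hq1, hc⟩ := hV
    simp only [nodeVarSum]
    have hterm : ∀ a : Fin (n + 1), nodeVarSum (ps * σ a) (pq * q a) (child a)
        = ps ^ 2 / pq * nodeVarSum (1 * σ a) (1 * q a) (child a) := by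
      intro a
      rw [nodeVarSum_scale _ (hc a) _ _ (mul_pos hpq (hq a)),
        nodeVarSum_scale _ (hc a) (1 * σ a) (1 * q a) (by simpa using hq a)]
      have hqa : q a ≠ 0 := (hq a).ne'
      have hpq' : pq ≠ 0 := hpq.ne'
      field_simp
    rw [Finset.sum_congr rfl fun a _ => hterm a, ← Finset.mul_sum, mul_add]
    congr 1
    have hpq' : pq ≠ 0 := hpq.ne'
    field_simp

lemma var_decomp : ∀ (T : GameTree), T.Valid →
    varT T (fun z => bval z) = nodeVarSum 1 1 T
  | leaf u, _ => by simp [varT, expT, bval, nodeVarSum]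
  | node n child σ q b, hV => by
    obtain ⟨hσ, hσ1, hq, hq1, hc⟩ := hV
    have hVn : Valid (node n child σ q b) := ⟨hσ, hσ1, hq, hq1, hc⟩
    set E := eu (node n child σ q b) with hE
    set C := ∑ a, σ a * b a with hC
    set g : Fin (n + 1) → ℝ := fun a => σ a / q a * (eu (child a) - b a) with hg
    have hm : ∑ a, q a * g a = E - C := by
      rw [hE]
      simp only [eu, hg, hC]
      rw [← Finset.sum_sub_distrib]
      refine Finset.sum_congr rfl fun a _ => ?_
      have hqa : q a ≠ 0 := (hq a).ne'
      field_simp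
    have hinner : ∀ a : Fin (n + 1),
        expT (child a) (fun t => (bval (Traj.step (σ := σ) (q := q) (b := b) a t) - E) ^ 2)
          = (σ a / q a) ^ 2 * varT (child a) (fun z => bval z)
            + (g a - ∑ a', q a' * g a') ^ 2 := by
      intro a
      rw [hm]
      have heq : (fun t : Traj (child a) =>
            (bval (Traj.step (σ := σ) (q := q) (b := b) a t) - E) ^ 2)
          = fun t => (σ a / q a * (bval t - expT (child a) (fun z => bval z))
              + (g a - (E - C))) ^ 2 := by
        funext t
        rw [bval_step, exp_bval _ (hc a)]
        simp only [hg, hC]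
        ring
      rw [heq, expT_sq_affine _ (hc a)]
    unfold varT
    rw [exp_bval _ hVn, ← hE]
    simp only [expT]
    calc ∑ a, q a * expT (child a)
            (fun t => (bval (Traj.step (σ := σ) (q := q) (b := b) a t) - E) ^ 2)
        = ∑ a, (σ a ^ 2 / q a * nodeVarSum 1 1 (child a)
            + q a * (g a - ∑ a', q a' * g a') ^ 2) := by
          refine Finset.sum_congr rfl fun a _ => ?_
          rw [hinner a, var_decomp _ (hc a)]
          have hqa : q a ≠ 0 := (hq a).ne'
          field_simp
      _ = nodeVarSum 1 1 (node n child σ q b) := by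
          simp only [nodeVarSum, ← hg]
          rw [Finset.sum_add_distrib]
          have hterm : ∀ a : Fin (n + 1), nodeVarSum (1 * σ a) (1 * q a) (child a)
              = σ a ^ 2 / q a * nodeVarSum 1 1 (child a) := by
            intro a
            rw [nodeVarSum_scale _ (hc a) (1 * σ a) (1 * q a) (by simpa using hq a)]
            have hqa : q a ≠ 0 := (hq a).ne'
            field_simp
          rw [Finset.sum_congr rfl fun a _ => hterm a]
          unfold varFin
          rw [add_comm]
          norm_num

end GameTree

/-- Full variance decomposition over internal nodes: for every game tree
and arbitrary baseline,
`Var_z[v̂(T; z)] = Σ_h (π^σ(h))²/π^q(h) · Var_{a∼q_h}[(σ_h(a)/q_h(a))·(û(h_a) − b_h(a))]`,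
the sum ranging over all internal nodes `h` of `T` (initial accumulators `1`). -/
theorem var_full_decomposition (T : GameTree) (hV : T.Valid) :
    GameTree.varT T (fun z => GameTree.bval z) = GameTree.nodeVarSum 1 1 T := by
  exact GameTree.var_decomp T hV
end

section
/- For every internal inductive game tree T and every action a ∈ A(T), the conditional expectation of the root's baseline-corrected value given that the first sampled action of the trajectory is a equals E_z[v̂(T; z) | first action of z is a] = Σ_{a' ∈ A(T)} σ_T(a')·b_T(a') + (σ_T(a)/q_T(a))·(û(T_a) − b_T(a)); consequently the variance over a ∼ q_T of this conditional expectation equals Var_{a∼q_T}[ (σ_T(a)/q_T(a))·(û(T_a) − b_T(a)) ]. -/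
namespace GameTree

/-- Conditional expectation `E_z[f(z) | first sampled action of z is a]`: the expectation
over the trajectory distribution restricted to trajectories beginning with `a`. -/
noncomputable def condExp {n : ℕ} {child : Fin (n + 1) → GameTree}
    {σ q b : Fin (n + 1) → ℝ}
    (a : Fin (n + 1)) (f : Traj (.node n child σ q b) → ℝ) : ℝ :=
  expT (child a) (fun t => f (.step a t))

end GameTree

namespace GameTree

lemma expT_affine : ∀ (T : GameTree), Valid T → ∀ (c d : ℝ) (f : Traj T → ℝ),
    expT T (fun t => c * f t + d) = c * expT T f + d
  | leaf u, _, c, d, f => by simp [expT]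
  | node n child σ q b, hV, c, d, f => by
      obtain ⟨_, _, _, hq1, hch⟩ := hV
      simp only [expT]
      have : ∀ a : Fin (n + 1),
          expT (child a) (fun t => c * f (.step a t) + d)
            = c * expT (child a) (fun t => f (.step a t)) + d :=
        fun a => expT_affine (child a) (hch a) c d _
      simp only [this]
      rw [show (∑ a : Fin (n + 1), q a * (c * expT (child a) (fun t => f (.step a t)) + d))
          = c * ∑ a : Fin (n + 1), q a * expT (child a) (fun t => f (.step a t))
            + d * ∑ a : Fin (n + 1), q a by
        rw [Finset.mul_sum, Finset.mul_sum, ← Finset.sum_add_distrib]; congr 1; ext a; ring]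
      rw [hq1]; ring

lemma sum_indic {n : ℕ} (σ q b : Fin (n + 1) → ℝ) (a : Fin (n + 1)) (x : ℝ) :
    (∑ a' : Fin (n + 1), σ a' *
        ((if a' = a then (1 : ℝ) else 0) / q a' * (x - b a') + b a'))
      = σ a / q a * (x - b a) + ∑ a' : Fin (n + 1), σ a' * b a' := by
  have : ∀ a' : Fin (n + 1),
      σ a' * ((if a' = a then (1 : ℝ) else 0) / q a' * (x - b a') + b a')
        = (if a' = a then σ a / q a * (x - b a) else 0) + σ a' * b a' := by
    intro a'
    by_cases h : a' = a <;> simp [h] <;> ring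
  simp only [this, Finset.sum_add_distrib, Finset.sum_ite_eq', Finset.mem_univ, if_true]

lemma expT_bval : ∀ (T : GameTree), Valid T → expT T (fun z => bval z) = eu T
  | leaf u, _ => by simp [expT, bval, eu]
  | node n child σ q b, hV => by
      obtain ⟨_, hσ1, hqpos, hq1, hch⟩ := hV
      simp only [expT, bval, eu]
      have h1 : ∀ a : Fin (n + 1),
          expT (child a) (fun t => ∑ a' : Fin (n + 1), σ a' *
              ((if a' = a then (1 : ℝ) else 0) / q a' * (bval t - b a') + b a'))
            = σ a / q a * (eu (child a) - b a) + ∑ a' : Fin (n + 1), σ a' * b a' := by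
        intro a
        have := expT_affine (child a) (hch a) (σ a / q a)
          ((∑ a' : Fin (n + 1), σ a' * b a') - σ a / q a * b a)
          (fun t => bval t)
        rw [expT_bval (child a) (hch a)] at this
        calc expT (child a) (fun t => ∑ a' : Fin (n + 1), σ a' *
              ((if a' = a then (1 : ℝ) else 0) / q a' * (bval t - b a') + b a'))
            = expT (child a) (fun t => σ a / q a * bval t
                + ((∑ a' : Fin (n + 1), σ a' * b a') - σ a / q a * b a)) := by
              congr 1; ext t; rw [sum_indic]; ring
          _ = _ := by rw [this]; ring
      simp only [h1]
      have hterm : ∀ a : Fin (n + 1),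
          q a * (σ a / q a * (eu (child a) - b a) + ∑ a' : Fin (n + 1), σ a' * b a')
            = (σ a * eu (child a) - σ a * b a)
              + q a * ∑ a' : Fin (n + 1), σ a' * b a' := by
        intro a
        have hq : q a ≠ 0 := ne_of_gt (hqpos a)
        field_simp
      simp only [hterm, Finset.sum_add_distrib, Finset.sum_sub_distrib,
        ← Finset.sum_mul, hq1, one_mul]
      ring

lemma condExp_bval_eq {n : ℕ} {child : Fin (n + 1) → GameTree}
    {σ q b : Fin (n + 1) → ℝ}
    (hV : Valid (.node n child σ q b)) (a : Fin (n + 1)) :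
    condExp a (fun z : Traj (.node n child σ q b) => bval z)
      = (∑ a' : Fin (n + 1), σ a' * b a') + σ a / q a * (eu (child a) - b a) := by
  obtain ⟨_, _, _, _, hch⟩ := hV
  simp only [condExp, bval]
  have := expT_affine (child a) (hch a) (σ a / q a)
    ((∑ a' : Fin (n + 1), σ a' * b a') - σ a / q a * b a) (fun t => bval t)
  rw [expT_bval (child a) (hch a)] at this
  calc expT (child a) (fun t => ∑ a' : Fin (n + 1), σ a' *
          ((if a' = a then (1 : ℝ) else 0) / q a' * (bval t - b a') + b a'))
      = expT (child a) (fun t => σ a / q a * bval t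
          + ((∑ a' : Fin (n + 1), σ a' * b a') - σ a / q a * b a)) := by
        congr 1; ext t; rw [sum_indic]; ring
    _ = _ := by rw [this]; ring

lemma varFin_const_add {m : ℕ} (q g : Fin m → ℝ) (C : ℝ) (hq1 : ∑ a, q a = 1) :
    varFin q (fun a => C + g a) = varFin q g := by
  unfold varFin
  have hmean : (∑ a', q a' * (C + g a')) = C + ∑ a', q a' * g a' := by
    rw [show (∑ a', q a' * (C + g a')) = C * (∑ a', q a') + ∑ a', q a' * g a' by
      rw [Finset.mul_sum, ← Finset.sum_add_distrib]; congr 1; ext a; ring]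
    rw [hq1]; ring
  simp only [hmean]
  congr 1; ext a; ring

end GameTree

/-- For every internal game tree and every action `a`, the conditional
expectation of the root's baseline-corrected value given that the first sampled action is
`a` equals
`E_z[v̂(T; z) | first action is a] = Σ_{a'} σ_T(a')·b_T(a') + (σ_T(a)/q_T(a))·(û(T_a) − b_T(a))`;
consequently the variance over `a ∼ q_T` of this conditional expectation equals
`Var_{a∼q_T}[(σ_T(a)/q_T(a))·(û(T_a) − b_T(a))]`. -/
theorem condExp_bval (n : ℕ) (child : Fin (n + 1) → GameTree)
    (σ q b : Fin (n + 1) → ℝ)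
    (hV : GameTree.Valid (.node n child σ q b)) :
    (∀ a : Fin (n + 1),
      GameTree.condExp a (fun z : GameTree.Traj (.node n child σ q b) => GameTree.bval z)
        = (∑ a' : Fin (n + 1), σ a' * b a')
          + σ a / q a * (GameTree.eu (child a) - b a)) ∧
    GameTree.varFin q (fun a =>
        GameTree.condExp a (fun z : GameTree.Traj (.node n child σ q b) => GameTree.bval z))
      = GameTree.varFin q (fun a => σ a / q a * (GameTree.eu (child a) - b a)) := by
  have h1 := fun a => GameTree.condExp_bval_eq hV a
  refine ⟨h1, ?_⟩
  have hq1 : ∑ a : Fin (n + 1), q a = 1 := hV.2.2.2.1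
  calc GameTree.varFin q (fun a =>
        GameTree.condExp a (fun z : GameTree.Traj (.node n child σ q b) => GameTree.bval z))
      = GameTree.varFin q (fun a => (∑ a' : Fin (n + 1), σ a' * b a')
          + σ a / q a * (GameTree.eu (child a) - b a)) := by
        congr 1; ext a; exact h1 a
    _ = _ := GameTree.varFin_const_add q _ _ hq1
end
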